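/- arXiv:math/0408340 — 10 statements merged into one kernel-verified Lean document; each statement's English description precedes it below -/
import Mathlib

section
/- For c₁ ∈ (3/4, 1), the interval A = [c₂, c₁], where c₂ = f_{c₁}(c₁), is forward invariant under the threshold map f_{c₁}. -/
open Set Real

noncomputable def f (x : ℝ) : ℝ := 4 * x * (1 - x)

noncomputable def fc (c₁ x : ℝ) : ℝ := min (f x) c₁

theorem absorbing_interval_forward_invariant (c₁ : ℝ)
    (hc : c₁ ∈ Set.Ioo (3/4 : ℝ) 1) :
    ∀ x ∈ Set.Icc (fc c₁ c₁) c₁, fc c₁ x ∈ Set.Icc (fc c₁ c₁) c₁ := by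
  obtain ⟨h1, h2⟩ := hc
  have hfle : f c₁ ≤ c₁ := by unfold f; nlinarith
  have hc2 : fc c₁ c₁ = f c₁ := min_eq_left hfle
  intro x hx
  rw [hc2] at hx ⊢
  obtain ⟨hx1, hx2⟩ := hx
  have hlow : x ≥ 1 - c₁ := by
    have : f c₁ ≥ 1 - c₁ := by unfold f; nlinarith
    linarith
  constructor
  · apply le_min _ hfle
    unfold f at hx1 ⊢
    nlinarith [mul_nonneg (sub_nonneg.2 hx2) (by linarith : x + c₁ - 1 ≥ 0)]
  · exact min_le_right _ _
end

section
/- For c₁ ∈ (3/4, 1), every point x ∈ [0,1] with x ≠ 0 and x ≠ 1 has some forward iterate under the threshold map f_{c₁} lying in the interval A = [c₂, c₁]. -/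
open Set Real

theorem eventually_absorbed (c₁ : ℝ) (hc : c₁ ∈ Set.Ioo (3/4 : ℝ) 1) :
    ∀ x ∈ Set.Icc (0:ℝ) 1, x ≠ 0 → x ≠ 1 →
      ∃ n : ℕ, (fc c₁)^[n] x ∈ Set.Icc (fc c₁ c₁) c₁ := by
  obtain ⟨h1, h2⟩ := hc
  have hc2 : fc c₁ c₁ = 4 * c₁ * (1 - c₁) := by
    unfold fc f
    exact min_eq_left (by nlinarith)
  set c₂ := fc c₁ c₁ with hc2def
  have hc2pos : 0 < c₂ := by rw [hc2]; nlinarith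
  have hc2lt : c₂ < 3/4 := by rw [hc2]; nlinarith
  set r := 4 * (1 - c₂) with hr
  have hr1 : 1 < r := by rw [hr]; linarith
  have hr0 : 0 < r := by linarith
  have key : ∀ n : ℕ, ∀ y : ℝ, 0 < y → y ≤ c₁ → c₂ < r ^ n * y →
      ∃ m, (fc c₁)^[m] y ∈ Set.Icc c₂ c₁ := by
    intro n
    induction n with
    | zero =>
      intro y hy0 hy1 h
      exact ⟨0, le_of_lt (by simpa using h), hy1⟩
    | succ n ih =>
      intro y hy0 hy1 h
      by_cases hyc : c₂ ≤ y
      · exact ⟨0, hyc, hy1⟩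
      push_neg at hyc
      have hylt1 : y < 1 := by linarith
      have hfy : r * y ≤ f y := by unfold f; nlinarith
      have hfypos : 0 < f y := by
        unfold f; nlinarith
      by_cases hfc : f y ≤ c₁
      · have hstep : fc c₁ y = f y := min_eq_left hfc
        have hpow : c₂ < r ^ n * f y := by
          have h1' : r ^ (n+1) * y = r ^ n * (r * y) := by ring
          have h2' : r ^ n * (r * y) ≤ r ^ n * f y :=
            mul_le_mul_of_nonneg_left hfy (le_of_lt (pow_pos hr0 n))
          linarith [h.trans_le (h1' ▸ h2' : r ^ (n+1) * y ≤ r ^ n * f y)]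
        obtain ⟨m, hm⟩ := ih (f y) hfypos hfc hpow
        refine ⟨m + 1, ?_⟩
        rw [Function.iterate_succ_apply, hstep]
        exact hm
      · push_neg at hfc
        refine ⟨1, ?_⟩
        simp only [Function.iterate_one]
        have : fc c₁ y = c₁ := min_eq_right (le_of_lt hfc)
        rw [this]
        exact ⟨by linarith, le_refl _⟩
  intro x hx hx0 hx1
  have hx0' : 0 < x := lt_of_le_of_ne hx.1 (Ne.symm hx0)
  have hx1' : x < 1 := lt_of_le_of_ne hx.2 hx1
  have hfx : 0 < f x := by unfold f; nlinarith
  set y := fc c₁ x with hy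
  have hy0 : 0 < y := lt_min hfx (by linarith)
  have hy1 : y ≤ c₁ := min_le_right _ _
  obtain ⟨n, hn⟩ := pow_unbounded_of_one_lt (c₂ / y) hr1
  have hpow : c₂ < r ^ n * y := by
    rw [div_lt_iff₀ hy0] at hn
    linarith [hn]
  obtain ⟨m, hm⟩ := key n y hy0 hy1 hpow
  exact ⟨m + 1, by rwa [Function.iterate_succ_apply]⟩
end

section
/- For c₁ ∈ (3/4, (5+√5)/8), the threshold map f_{c₁} has a super-stable periodic orbit of period 2, namely f_{c₁}(c₁) = c₂ and f_{c₁}(c₂) = c₁, where f(c₂) > c₁ strictly (so c₂ lies in the interior of C). -/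
open Set Real

theorem superstable_period_two (c₁ : ℝ)
    (hc : c₁ ∈ Set.Ioo (3/4 : ℝ) ((5 + Real.sqrt 5) / 8)) :
    f c₁ < c₁ ∧ fc c₁ c₁ = f c₁ ∧ fc c₁ (f c₁) = c₁ ∧ c₁ < f (f c₁) := by
  obtain ⟨h1, h2⟩ := hc
  have hs : Real.sqrt 5 ^ 2 = 5 := Real.sq_sqrt (by norm_num)
  have hs0 : (0:ℝ) ≤ Real.sqrt 5 := Real.sqrt_nonneg 5
  have key : 16*c₁^2 - 20*c₁ + 5 < 0 := by
    nlinarith [sq_nonneg (8*c₁ - 5 - Real.sqrt 5)]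
  have hflt : f c₁ < c₁ := by unfold f; nlinarith
  have hstrict : c₁ < f (f c₁) := by
    unfold f
    nlinarith [mul_pos (mul_pos (by linarith : (0:ℝ) < c₁) (by linarith : (0:ℝ) < 4*c₁-3))
      (by linarith : (0:ℝ) < -(16*c₁^2 - 20*c₁ + 5))]
  exact ⟨hflt, min_eq_left hflt.le, min_eq_right hstrict.le, hstrict⟩
end

section
/- The condition f(c₁) ∈ [c₀, 1-c₀], where c₀ = 1/2 - √(1-c₁)/2 and f(x) = 4x(1-x), holds for all c₁ with 3/4 < c₁ < (5+√5)/8, and fails for c₁ > (5+√5)/8. -/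
open Set Real

noncomputable def c₀ (c₁ : ℝ) : ℝ := 1/2 - Real.sqrt (1 - c₁) / 2

theorem period_two_window :
    (∀ c₁ : ℝ, c₁ ∈ Set.Ioo (3/4 : ℝ) ((5 + Real.sqrt 5) / 8) →
      f c₁ ∈ Set.Icc (c₀ c₁) (1 - c₀ c₁)) ∧
    (∀ c₁ : ℝ, c₁ ∈ Set.Ioo ((5 + Real.sqrt 5) / 8) (1:ℝ) →
      f c₁ ∉ Set.Icc (c₀ c₁) (1 - c₀ c₁)) := by
  have ht2 : (Real.sqrt 5)^2 = 5 := Real.sq_sqrt (by norm_num)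
  have htpos : 2 < Real.sqrt 5 := by nlinarith [Real.sqrt_nonneg 5]
  constructor
  · rintro c₁ ⟨h1, h2⟩
    simp only [f, c₀, Set.mem_Icc]
    set t := Real.sqrt 5 with ht
    have hc1lt : c₁ < 1 := by nlinarith
    set s := Real.sqrt (1 - c₁) with hs
    have hs0 : 0 ≤ s := Real.sqrt_nonneg _
    have hs2 : s^2 = 1 - c₁ := Real.sq_sqrt (by linarith)
    have hshalf : s < 1/2 := by nlinarith
    have h3 : s > (t-1)/4 := by nlinarith
    have hkey : 4*s^2 + 2*s - 1 > 0 := by nlinarith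
    constructor
    · nlinarith [mul_nonneg (mul_nonneg (by linarith : (0:ℝ) ≤ 2*s+1) (by linarith : (0:ℝ) ≤ 1 - s)) (le_of_lt hkey)]
    · nlinarith [mul_nonneg (mul_nonneg (by linarith : (0:ℝ) ≤ 1 - 2*s) (by linarith : (0:ℝ) ≤ s+1)) (by nlinarith : (0:ℝ) ≤ 1 + 2*s - 4*s^2)]
  · rintro c₁ ⟨h1, h2⟩
    simp only [f, c₀, Set.mem_Icc, not_and_or, not_le]
    set t := Real.sqrt 5 with ht
    set s := Real.sqrt (1 - c₁) with hs
    have hs0 : 0 ≤ s := Real.sqrt_nonneg _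
    have hs2 : s^2 = 1 - c₁ := Real.sq_sqrt (by linarith)
    have h3 : s < (t-1)/4 := by nlinarith
    have hkey : 4*s^2 + 2*s - 1 < 0 := by nlinarith
    left
    nlinarith [mul_pos (mul_pos (by linarith : (0:ℝ) < 2*s+1) (by nlinarith : (0:ℝ) < 1 - s)) (by linarith : (0:ℝ) < 1 - 2*s - 4*s^2)]
end

section
/- For c₁ ∈ (3/4, 1) and N ≥ 1, the product set Aᴺ = [c₂, c₁]ᴺ is forward invariant under the cascading map F_{c₁}: if each coordinate of a state lies in [c₂, c₁], then after one step of simultaneous iteration by f followed by cascading of excesses, each coordinate again lies in [c₂, c₁]. -/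
open Set Real

/-- Sequential cascading of a list of values with incoming excess `e`:
at each site the value plus the incoming excess is capped at `c₁` and the
surplus is passed on; returns the new list together with the final excess. -/
noncomputable def cascade (c₁ : ℝ) : List ℝ → ℝ → List ℝ × ℝ
  | [], e => ([], e)
  | y :: ys, e =>
      if y + e ≤ c₁ then
        let r := cascade c₁ ys 0
        ((y + e) :: r.1, r.2)
      else
        let r := cascade c₁ ys (y + e - c₁)
        (c₁ :: r.1, r.2)

/-- The cascading map: apply the logistic map at each site, then cascade. -/
noncomputable def Fmap (c₁ : ℝ) (xs : List ℝ) : List ℝ :=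
  (cascade c₁ (xs.map f) 0).1

/-! Excesses are nonnegative, so cascading never lowers a value below its input and caps it
at `c₁`; hence it preserves any lower bound `c₂ ≤ c₁`. For the logistic map, `f` is symmetric
about `1/2`, so `f x ≥ f c₁ = c₂` on `[1 - c₁, c₁] ⊇ [c₂, c₁]`, the inclusion holding because
`c₂ ≥ 1 - c₁` once `c₁ ≥ 1/4`. -/

theorem f_sub_f (c x : ℝ) : f x - f c = 4 * (c - x) * (c + x - 1) := by
  unfold f; ring

theorem f_le_f_of_mem_Icc {c x : ℝ} (hx : x ∈ Icc (1 - c) c) : f c ≤ f x := by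
  rw [← sub_nonneg, f_sub_f]
  exact mul_nonneg (mul_nonneg (by norm_num) (sub_nonneg.2 hx.2)) (by linarith [hx.1])

theorem one_sub_le_f {c : ℝ} (h₀ : 1 / 4 ≤ c) (h₁ : c ≤ 1) : 1 - c ≤ f c := by
  unfold f; nlinarith

theorem f_le_self {c : ℝ} (hc : 3 / 4 ≤ c) : f c ≤ c := by
  unfold f; nlinarith

theorem le_f_of_mem_Icc_f {c x : ℝ} (h₀ : 1 / 4 ≤ c) (h₁ : c ≤ 1) (hx : x ∈ Icc (f c) c) :
    f c ≤ f x :=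
  f_le_f_of_mem_Icc ⟨(one_sub_le_f h₀ h₁).trans hx.1, hx.2⟩

theorem mem_Icc_of_mem_cascade_fst {c₁ c₂ : ℝ} (h : c₂ ≤ c₁) :
    ∀ {ys : List ℝ} {e : ℝ}, 0 ≤ e → (∀ y ∈ ys, c₂ ≤ y) →
      ∀ x ∈ (cascade c₁ ys e).1, x ∈ Icc c₂ c₁
  | [], _, _, _, x, hx => by simp [cascade] at hx
  | y :: ys, e, he, hys, x, hx => by
    have htail : ∀ z ∈ ys, c₂ ≤ z := fun z hz => hys z (List.mem_cons_of_mem _ hz)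
    by_cases hy : y + e ≤ c₁
    · simp only [cascade, hy, if_true, List.mem_cons] at hx
      rcases hx with rfl | hx
      · exact ⟨(hys _ List.mem_cons_self).trans (le_add_of_nonneg_right he), hy⟩
      · exact mem_Icc_of_mem_cascade_fst h le_rfl htail x hx
    · simp only [cascade, hy, if_false, List.mem_cons] at hx
      rcases hx with rfl | hx
      · exact ⟨h, le_rfl⟩
      · exact mem_Icc_of_mem_cascade_fst h (by linarith) htail x hx

theorem cascading_absorbing_set_general (c₁ : ℝ) (hc : c₁ ∈ Set.Ioo (3/4 : ℝ) 1)
    (xs : List ℝ)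
    (hxs : ∀ x ∈ xs, x ∈ Set.Icc (f c₁) c₁) :
    ∀ x ∈ Fmap c₁ xs, x ∈ Set.Icc (f c₁) c₁ := by
  refine mem_Icc_of_mem_cascade_fst (f_le_self hc.1.le) le_rfl ?_
  rintro _ hy
  obtain ⟨x, hx, rfl⟩ := List.mem_map.1 hy
  exact le_f_of_mem_Icc_f (by linarith [hc.1]) hc.2.le (hxs x hx)

theorem cascading_absorbing_set (c₁ : ℝ) (hc : c₁ ∈ Set.Ioo (3/4 : ℝ) 1)
    (N : ℕ) (hN : 1 ≤ N) (xs : List ℝ) (hlen : xs.length = N)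
    (hxs : ∀ x ∈ xs, x ∈ Set.Icc (f c₁) c₁) :
    ∀ x ∈ Fmap c₁ xs, x ∈ Set.Icc (f c₁) c₁ :=
  cascading_absorbing_set_general c₁ hc xs hxs
end

section
/- For c₁ ∈ (3/4, 1) and N ≥ 1, if a point (x₁,…,x_N) ∈ [0,1]ᴺ has the property that each coordinate xᵢ has its full forward orbit under the threshold map f_{c₁} disjoint from C = {x : f(x) ≥ c₁}, then the orbit of (x₁,…,x_N) under the cascading map F_{c₁} evolves with zero excess at every site at every step, i.e., F_{c₁}ⁿ(x₁,…,x_N) = (f_{c₁}ⁿ(x₁),…,f_{c₁}ⁿ(x_N)) for all n. -/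
open Set Real

/-!
A point `y` with `c₁ ≤ f y` and `c₁ > 0` automatically lies in `[0,1]`, so along the given orbits
`f` never reaches `c₁`. Then every site of the cascade receives no excess and stays below the cap,
so `F_{c₁}` acts coordinatewise as `f_{c₁}` at every step.
-/

theorem List.iterate_eq_map_iterate_of_forall {α : Type*} {G : List α → List α} {g : α → α}
    {p : α → Prop} (hG : ∀ xs : List α, (∀ x ∈ xs, p x) → G xs = xs.map g) :
    ∀ (n : ℕ) (xs : List α), (∀ x ∈ xs, ∀ m, p (g^[m] x)) → G^[n] xs = xs.map (g^[n])
  | 0, xs, _ => by simp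
  | n + 1, xs, h => by
    have h_step : G xs = xs.map g := hG xs fun x hx => h x hx 0
    have h_orbit : ∀ y ∈ xs.map g, ∀ m, p (g^[m] y) := by
      simp only [List.mem_map, forall_exists_index, and_imp, forall_apply_eq_imp_iff₂]
      exact fun x hx m => h x hx (m + 1)
    rw [Function.iterate_succ_apply, h_step,
      List.iterate_eq_map_iterate_of_forall hG n _ h_orbit, List.map_map]
    rfl

theorem mem_Icc_of_le_f {c x : ℝ} (hc : 0 < c) (hx : c ≤ f x) : x ∈ Icc (0 : ℝ) 1 := by
  unfold f at hx
  constructor <;> nlinarith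

theorem cascade_of_forall_le {c₁ : ℝ} :
    ∀ ys : List ℝ, (∀ y ∈ ys, y ≤ c₁) → cascade c₁ ys 0 = (ys, 0)
  | [], _ => rfl
  | y :: ys, hy => by
    have hy₀ : y + 0 ≤ c₁ := by simpa using hy y List.mem_cons_self
    rw [cascade, if_pos hy₀, cascade_of_forall_le ys fun z hz => hy z (List.mem_cons_of_mem _ hz)]
    simp

theorem Fmap_eq_map_fc {c₁ : ℝ} (xs : List ℝ) (hxs : ∀ x ∈ xs, f x ≤ c₁) :
    Fmap c₁ xs = xs.map (fc c₁) := by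
  rw [Fmap, cascade_of_forall_le _ (by simpa using hxs), List.map_inj_left]
  exact fun x hx => (min_eq_left (hxs x hx)).symm

theorem cascading_trivial_on_avoiding_orbits_general (c₁ : ℝ)
    (hc : c₁ ∈ Set.Ioo (3/4 : ℝ) 1)
    (xs : List ℝ)
    (h : ∀ x ∈ xs, ∀ n : ℕ,
      (fc c₁)^[n] x ∉ {y : ℝ | y ∈ Set.Icc (0:ℝ) 1 ∧ c₁ ≤ f y}) :
    ∀ n : ℕ, (Fmap c₁)^[n] xs = xs.map ((fc c₁)^[n]) := by
  have h_below : ∀ x ∈ xs, ∀ n, f ((fc c₁)^[n] x) ≤ c₁ := by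
    intro x hx n
    by_contra! h_above
    have hc₀ : (0 : ℝ) < c₁ := by linarith [hc.1]
    exact h x hx n ⟨mem_Icc_of_le_f hc₀ h_above.le, h_above.le⟩
  exact fun n => List.iterate_eq_map_iterate_of_forall Fmap_eq_map_fc n xs h_below

theorem cascading_trivial_on_avoiding_orbits (c₁ : ℝ)
    (hc : c₁ ∈ Set.Ioo (3/4 : ℝ) 1) (N : ℕ) (hN : 1 ≤ N)
    (xs : List ℝ) (hlen : xs.length = N)
    (h : ∀ x ∈ xs, ∀ n : ℕ,
      (fc c₁)^[n] x ∉ {y : ℝ | y ∈ Set.Icc (0:ℝ) 1 ∧ c₁ ≤ f y}) :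
    ∀ n : ℕ, (Fmap c₁)^[n] xs = xs.map ((fc c₁)^[n]) :=
  cascading_trivial_on_avoiding_orbits_general c₁ hc xs h
end

section
/- Suppose c₁ ∈ (3/4,1) is such that the threshold map f_{c₁} has a super-stable periodic orbit of minimal period p through c₁ (i.e., f_{c₁}^p(c₁) = c₁ with the orbit entering the interior of C). Then for any N ≥ 1, the diagonal point (c₁,…,c₁) ∈ [0,1]ᴺ is a periodic point of period p for the cascading map F_{c₁}, and every initial condition in Cᴺ is mapped to (c₁,…,c₁) in one step of F_{c₁}. -/
open Set Real

lemma cascade_ge (c₁ : ℝ) : ∀ (ys : List ℝ) (e : ℝ), (∀ y ∈ ys, c₁ ≤ y) → 0 ≤ e →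
    (cascade c₁ ys e).1 = List.replicate ys.length c₁
  | [], e, _, _ => by simp [cascade]
  | y :: ys, e, h, he => by
    have hy : c₁ ≤ y := h y (by simp)
    by_cases hle : y + e ≤ c₁
    · have hye : y + e = c₁ := le_antisymm hle (by linarith)
      simp [cascade, hle, hye,
        cascade_ge c₁ ys 0 (fun z hz => h z (by simp [hz])) le_rfl, List.replicate_succ]
    · push_neg at hle
      simp [cascade, not_le.2 hle,
        cascade_ge c₁ ys (y + e - c₁) (fun z hz => h z (by simp [hz])) (by linarith),
        List.replicate_succ]

lemma cascade_le (c₁ a : ℝ) (ha : a ≤ c₁) : ∀ n : ℕ,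
    (cascade c₁ (List.replicate n a) 0).1 = List.replicate n a
  | 0 => by simp [cascade]
  | n + 1 => by
    simp [List.replicate_succ, cascade, ha, show a + 0 ≤ c₁ by linarith,
      cascade_le c₁ a ha n]

lemma Fmap_replicate (c₁ x : ℝ) (N : ℕ) :
    Fmap c₁ (List.replicate N x) = List.replicate N (fc c₁ x) := by
  unfold Fmap
  rw [List.map_replicate]
  by_cases h : f x ≤ c₁
  · rw [cascade_le c₁ (f x) h N, fc, min_eq_left h]
  · push_neg at h
    rw [cascade_ge c₁ _ 0 (fun y hy => (List.eq_of_mem_replicate hy) ▸ h.le) le_rfl,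
      List.length_replicate, fc, min_eq_right h.le]

lemma Fmap_iter (c₁ x : ℝ) (N k : ℕ) :
    (Fmap c₁)^[k] (List.replicate N x) = List.replicate N ((fc c₁)^[k] x) := by
  induction k with
  | zero => simp
  | succ k ih =>
    rw [Function.iterate_succ_apply', Function.iterate_succ_apply', ih, Fmap_replicate]

theorem in_phase_superstable_orbit (c₁ : ℝ) (hc : c₁ ∈ Set.Ioo (3/4 : ℝ) 1)
    (p : ℕ) (hp : 1 ≤ p)
    (hper : (fc c₁)^[p] c₁ = c₁)
    (hmin : ∀ k : ℕ, 0 < k → k < p → (fc c₁)^[k] c₁ ≠ c₁)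
    (hsup : ∃ k : ℕ, k < p ∧ c₁ < f ((fc c₁)^[k] c₁))
    (N : ℕ) (hN : 1 ≤ N) :
    (Fmap c₁)^[p] (List.replicate N c₁) = List.replicate N c₁ ∧
    (∀ k : ℕ, 0 < k → k < p →
      (Fmap c₁)^[k] (List.replicate N c₁) ≠ List.replicate N c₁) ∧
    (∀ xs : List ℝ, xs.length = N →
      (∀ x ∈ xs, x ∈ Set.Icc (0:ℝ) 1 ∧ c₁ ≤ f x) →
      Fmap c₁ xs = List.replicate N c₁) := by
  refine ⟨by rw [Fmap_iter, hper], fun k hk hkp h => ?_, fun xs hlen hmem => ?_⟩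
  · rw [Fmap_iter] at h
    exact hmin k hk hkp (List.replicate_right_injective (by omega) h)
  · unfold Fmap
    rw [cascade_ge c₁ _ 0 ?_ le_rfl, List.length_map, hlen]
    intro y hy
    obtain ⟨x, hx, rfl⟩ := List.mem_map.1 hy
    exact (hmem x hx).2
end

section
/- Let N = 2 and suppose f_{c₁} has a super-stable period-2 orbit (c₁ ∈ (3/4, (5+√5)/8)). If c₂ + e(c₂) ≤ 1 - c₀, where c₂ = f(c₁), e(c₂) = f(c₂) - c₁, and c₀ = 1/2 - √(1-c₁)/2, then the point (c₂, c₁) is periodic of period 2 under the cascading map F_{c₁}, giving an anti-phase orbit: F_{c₁}(c₂,c₁) = (c₁, c₂ + e(c₂)) and F_{c₁}(c₁, c₂+e(c₂)) = (c₂, c₁). -/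
open Set Real

/-- The two-site cascading map on `ℝ × ℝ`. -/
noncomputable def F2 (c₁ : ℝ) (p : ℝ × ℝ) : ℝ × ℝ :=
  if f p.1 ≤ c₁ then (f p.1, min (f p.2) c₁)
  else (c₁, min (f p.2 + (f p.1 - c₁)) c₁)

theorem anti_phase_orbit_exists (c₁ : ℝ)
    (hc : c₁ ∈ Set.Ioo (3/4 : ℝ) ((5 + Real.sqrt 5) / 8))
    (c₀ c₂ e : ℝ) (hc₀ : c₀ = 1/2 - Real.sqrt (1 - c₁) / 2)
    (hc₂ : c₂ = f c₁) (he : e = f c₂ - c₁)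
    (hcond : c₂ + e ≤ 1 - c₀) :
    F2 c₁ (c₂, c₁) = (c₁, c₂ + e) ∧ F2 c₁ (c₁, c₂ + e) = (c₂, c₁) := by
  obtain ⟨hl, hu⟩ := hc
  have h5n : (0:ℝ) ≤ Real.sqrt 5 := Real.sqrt_nonneg 5
  have h5 : (Real.sqrt 5) ^ 2 = 5 := Real.sq_sqrt (by norm_num)
  -- 16 c₁² - 20 c₁ + 5 < 0
  have hq : 16 * c₁ ^ 2 - 20 * c₁ + 5 < 0 := by
    have h1 : 8 * c₁ - 5 < Real.sqrt 5 := by linarith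
    have h2 : 0 < 8 * c₁ - 5 := by linarith
    nlinarith [sq_nonneg (Real.sqrt 5 - (8 * c₁ - 5))]
  have hc1lt1 : c₁ < 1 := by nlinarith
  set s : ℝ := Real.sqrt (1 - c₁) with hs_def
  have hs0 : 0 ≤ s := Real.sqrt_nonneg _
  have hs2 : s ^ 2 = 1 - c₁ := Real.sq_sqrt (by linarith)
  -- e > 0
  have hepos : 0 < e := by
    rw [he, hc₂]; unfold f
    have h3 : 0 < c₁ * (4 * c₁ - 3) := by nlinarith
    nlinarith [mul_pos h3 (by linarith : 0 < -(16 * c₁ ^ 2 - 20 * c₁ + 5))]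
  -- c₂ < c₁
  have hc2lt : c₂ < c₁ := by rw [hc₂]; unfold f; nlinarith
  set y : ℝ := c₂ + e with hy_def
  -- upper bound : y ≤ (1+s)/2
  have hyu : y ≤ (1 + s) / 2 := by
    have h0 : c₀ = 1/2 - s / 2 := hc₀
    linarith [hcond]
  -- s ≤ 2 c₁ - 1
  have hsc : s ≤ 2 * c₁ - 1 := by
    nlinarith [sq_nonneg (s - (2 * c₁ - 1))]
  -- y ≤ c₁
  have hyc : y ≤ c₁ := by linarith
  -- key lower bound : s ≥ 1 - 2 y
  have hkey : 1 - 2 * y ≤ s := by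
    rcases le_or_gt (1 - 2 * y) 0 with h | h
    · linarith
    · -- polynomial identity: (1-c₁) - (1-2y)² = e * (2(1-2y) + (4c₁-1)(4c₁-3))
      have hid : (1 - c₁) - (1 - 2 * y) ^ 2
          = e * (2 * (1 - 2 * y) + (4 * c₁ - 1) * (4 * c₁ - 3)) := by
        rw [hy_def, he, hc₂]; unfold f; ring
      have hrhs : 0 < e * (2 * (1 - 2 * y) + (4 * c₁ - 1) * (4 * c₁ - 3)) := by
        apply mul_pos hepos
        nlinarith
      have hlt : (1 - 2 * y) ^ 2 < s ^ 2 := by rw [hs2]; linarith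
      nlinarith
  -- f y ≥ c₁
  have hfy : c₁ ≤ f y := by
    unfold f
    nlinarith [mul_nonneg (by linarith : (0:ℝ) ≤ s - (1 - 2 * y))
      (by linarith : (0:ℝ) ≤ s - (2 * y - 1))]
  -- f c₂ = c₁ + e > c₁
  have hfc2 : f c₂ = c₁ + e := by rw [he]; ring
  constructor
  · have hcond1 : ¬ f (c₂, c₁).1 ≤ c₁ := by
      simp only; rw [hfc2]; linarith
    simp only [F2, if_neg hcond1]
    have h1 : f (c₂, c₁).2 + (f (c₂, c₁).1 - c₁) = c₂ + e := by
      simp only; rw [hfc2, ← hc₂]; ring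
    rw [h1, min_eq_left hyc]
  · have hcond2 : f (c₁, c₂ + e).1 ≤ c₁ := by
      simp only; rw [← hc₂]; linarith
    simp only [F2, if_pos hcond2]
    rw [← hc₂, min_eq_right hfy]
end

section
/- For N = 2, if c₂ + e(c₂) > 1 - c₀ (notation as below), then the cascading map F_{c₁} has no period-2 orbit passing through the point (c₂, c₁); in particular applying F_{c₁} twice to (c₂, c₁) does not return the first coordinate to c₂ via the anti-phase mechanism, since f(c₂ + e(c₂)) < c₁. -/
open Set Real

theorem anti_phase_orbit_fails (c₁ : ℝ)
    (hc : c₁ ∈ Set.Ioo (3/4 : ℝ) ((5 + Real.sqrt 5) / 8))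
    (c₀ c₂ e : ℝ) (hc₀ : c₀ = 1/2 - Real.sqrt (1 - c₁) / 2)
    (hc₂ : c₂ = f c₁) (he : e = f c₂ - c₁) (hepos : 0 < e)
    (hcond : 1 - c₀ < c₂ + e) :
    f (c₂ + e) < c₁ ∧ (F2 c₁)^[2] (c₂, c₁) ≠ (c₂, c₁) := by
  obtain ⟨h1, h2⟩ := hc
  have h5 : Real.sqrt 5 < 3 := by
    nlinarith [Real.sq_sqrt (show (0:ℝ) ≤ 5 by norm_num), Real.sqrt_nonneg 5]
  have hc1lt : c₁ < 1 := by nlinarith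
  have hs : Real.sqrt (1 - c₁) ^ 2 = 1 - c₁ := Real.sq_sqrt (by linarith)
  have hsnn : (0:ℝ) ≤ Real.sqrt (1 - c₁) := Real.sqrt_nonneg _
  have hcond' : 1/2 + Real.sqrt (1 - c₁) / 2 < c₂ + e := by rw [hc₀] at hcond; linarith
  have hpart1 : f (c₂ + e) < c₁ := by
    unfold f
    nlinarith [hs, hsnn, hcond', sq_nonneg (2*(c₂+e) - 1 - Real.sqrt (1 - c₁))]
  refine ⟨hpart1, ?_⟩
  have hfc₂ : c₁ < f c₂ := by rw [he] at hepos; linarith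
  have hc₂lt : c₂ < c₁ := by rw [hc₂]; unfold f; nlinarith
  have step1 : F2 c₁ (c₂, c₁) = (c₁, min (c₂ + e) c₁) := by
    unfold F2
    rw [if_neg (by push_neg; exact hfc₂)]
    have : f c₁ + (f c₂ - c₁) = c₂ + e := by rw [← hc₂, ← he]
    simp [this]
  have step2 : F2 c₁ (c₁, min (c₂ + e) c₁) = (c₂, min (f (min (c₂ + e) c₁)) c₁) := by
    unfold F2
    rw [if_pos (by simpa using (hc₂ ▸ hc₂lt.le))]
    simp [← hc₂]
  have hne : min (f (min (c₂ + e) c₁)) c₁ ≠ c₁ := by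
    rcases le_or_gt (c₂ + e) c₁ with h | h
    · rw [min_eq_left h]
      exact ne_of_lt (min_lt_iff.mpr (Or.inl hpart1))
    · rw [min_eq_right h.le, ← hc₂, min_eq_left hc₂lt.le]
      exact hc₂lt.ne
  have hit : (F2 c₁)^[2] (c₂, c₁) = (c₂, min (f (min (c₂ + e) c₁)) c₁) := by
    show F2 c₁ (F2 c₁ (c₂, c₁)) = _
    rw [step1, step2]
  rw [hit]
  intro heq
  exact hne (congrArg Prod.snd heq)
end

section
/- For c₁ ∈ (3/4, 1), for any a ∈ (0, c₁] there exist j₀ and points a₋ⱼ for j ≥ j₀ with f_{c₁}ʲ(a₋ⱼ) = a and a₋ⱼ → 0 as j → ∞; i.e., the interval (0, c₁] is contained in the unstable set of the fixed point 0 of the threshold map f_{c₁}. -/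
open Set Real Filter

noncomputable def gbr (y : ℝ) : ℝ := (1 - Real.sqrt (1 - y)) / 2

lemma gbr_props (c₁ : ℝ) (hc : c₁ ∈ Set.Ioo (3/4 : ℝ) 1) (y : ℝ)
    (hy : y ∈ Set.Ioc (0:ℝ) c₁) :
    fc c₁ (gbr y) = y ∧ gbr y ∈ Set.Ioc (0:ℝ) c₁ ∧ gbr y ≤ y / 2 := by
  obtain ⟨hc1, hc2⟩ := hc
  obtain ⟨hy1, hy2⟩ := hy
  have hylt1 : y < 1 := lt_of_le_of_lt hy2 hc2
  set t := Real.sqrt (1 - y) with ht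
  have ht0 : 0 ≤ t := Real.sqrt_nonneg _
  have ht2 : t ^ 2 = 1 - y := Real.sq_sqrt (by linarith)
  have htlt1 : t < 1 := by
    nlinarith [ht2, ht0]
  have hfg : f (gbr y) = y := by
    unfold f gbr
    rw [← ht]
    nlinarith [ht2]
  refine ⟨?_, ⟨?_, ?_⟩, ?_⟩
  · unfold fc
    rw [hfg]
    exact min_eq_left hy2
  · unfold gbr; rw [← ht]; linarith
  · unfold gbr; rw [← ht]; linarith
  · unfold gbr; rw [← ht]; nlinarith

theorem unstable_manifold_of_zero (c₁ : ℝ) (hc : c₁ ∈ Set.Ioo (3/4 : ℝ) 1) :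
    ∀ a ∈ Set.Ioc (0:ℝ) c₁, ∃ (j₀ : ℕ) (s : ℕ → ℝ),
      (∀ j : ℕ, j₀ ≤ j → (fc c₁)^[j] (s j) = a) ∧
      Filter.Tendsto s Filter.atTop (nhds 0) := by
  intro a ha
  refine ⟨0, fun j => gbr^[j] a, ?_, ?_⟩
  · have key : ∀ j : ℕ, (fc c₁)^[j] (gbr^[j] a) = a ∧ gbr^[j] a ∈ Set.Ioc (0:ℝ) c₁ := by
      intro j
      induction j with
      | zero => exact ⟨rfl, ha⟩
      | succ n ih =>
        obtain ⟨ih1, ih2⟩ := ih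
        obtain ⟨h1, h2, _⟩ := gbr_props c₁ hc _ ih2
        rw [Function.iterate_succ_apply' gbr, Function.iterate_succ_apply (fc c₁), h1]
        exact ⟨ih1, h2⟩
    exact fun j _ => (key j).1
  · have key : ∀ j : ℕ, gbr^[j] a ∈ Set.Ioc (0:ℝ) c₁ ∧ gbr^[j] a ≤ a * (1/2)^j := by
      intro j
      induction j with
      | zero => exact ⟨ha, by simp⟩
      | succ n ih =>
        obtain ⟨ih1, ih2⟩ := ih
        obtain ⟨_, h2, h3⟩ := gbr_props c₁ hc _ ih1
        rw [Function.iterate_succ_apply' gbr]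
        refine ⟨h2, ?_⟩
        calc gbr (gbr^[n] a) ≤ gbr^[n] a / 2 := h3
          _ ≤ a * (1/2)^n / 2 := by linarith
          _ = a * (1/2)^(n+1) := by ring
    refine squeeze_zero (fun j => (key j).1.1.le) (fun j => (key j).2) ?_
    have : Filter.Tendsto (fun j : ℕ => a * (1/2)^j) Filter.atTop (nhds (a * 0)) :=
      Filter.Tendsto.const_mul a (tendsto_pow_atTop_nhds_zero_of_lt_one (by norm_num) (by norm_num))
    simpa using this
end
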